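/- For each integer r ≥ 3 there exist polynomials Q_{r-1} of degree r-1 and a constant c_r such that Q_{r-1}''(z) - z Q_{r-1}(z) - c_r + z^r = 0 for all z, where c_r = (3k)!/(3^k k!) if r = 3k for some positive integer k, and c_r = 0 otherwise. Consequently, for any solution y of y'' = zy, the function P_{r-2}(z) y(z) + Q_{r-1}(z) y'(z) with P_{r-2} = -Q_{r-1}' satisfies d/dz[P_{r-2} y + Q_{r-1} y'] = z^r y(z) - c_r y(z). -/

import Mathlib

/-!
Since `(X ^ (r + 2))'' = (r + 1)(r + 2) X ^ r`, the choice
`Q_{r+2} = X ^ (r + 2) + (r + 1)(r + 2) Q_{r-1}` turns the identity for `r + 3` into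
`(r + 1)(r + 2)` times the identity for `r`, provided `c_{r+3} = (r + 1)(r + 2) c_r`; and
`(3k)! / (3^k k!) = ∏_{j<k} (3j + 1)(3j + 2)` obeys exactly this recurrence. The recursion
starts from `Q_{-1} = 0`, `Q_0 = 1`, `Q_1 = X`, with `c_0 = 1` and `c_1 = c_2 = 0`.
For a solution of `y'' = z y`, differentiating `-Q' y + Q y'` cancels the `Q' y'` terms and leaves
`(z Q - Q'') y = (z ^ r - c_r) y`.
-/

open Polynomial

/-- `airyQ R r` is the polynomial `Q_{r-1}` of the paper. -/
noncomputable def airyQ (R : Type*) [CommSemiring R] : ℕ → R[X]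
  | 0 => 0
  | 1 => 1
  | 2 => X
  | r + 3 => X ^ (r + 2) + C (((r + 1) * (r + 2) : ℕ) : R) * airyQ R r

def airyConst : ℕ → ℕ
  | 0 => 1
  | 1 => 0
  | 2 => 0
  | r + 3 => (r + 1) * (r + 2) * airyConst r

theorem three_pow_mul_factorial_ne_zero {K : Type*} [Field K] [CharZero K] (k : ℕ) :
    (3 : K) ^ k * (k.factorial : K) ≠ 0 :=
  mul_ne_zero (pow_ne_zero _ three_ne_zero) (Nat.cast_ne_zero.2 k.factorial_ne_zero)

theorem airyConst_eq_factorial_div {K : Type*} [Field K] [CharZero K] : ∀ r : ℕ,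
    (airyConst r : K) =
      if r % 3 = 0 then (r.factorial : K) / (3 ^ (r / 3) * ((r / 3).factorial : K)) else 0
  | 0 | 1 | 2 => by simp [airyConst]
  | s + 3 => by
    rw [airyConst, Nat.cast_mul, airyConst_eq_factorial_div s, Nat.add_mod_right]
    split_ifs with h
    · obtain ⟨k, rfl⟩ := Nat.dvd_of_mod_eq_zero h
      rw [show (3 * k + 3) / 3 = k + 1 by omega, show 3 * k / 3 = k by omega, mul_div_assoc',
        div_eq_div_iff (three_pow_mul_factorial_ne_zero k) (three_pow_mul_factorial_ne_zero (k + 1))]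
      push_cast [Nat.factorial_succ]
      ring
    · simp

theorem natDegree_airyQ (R : Type*) [CommSemiring R] [Nontrivial R] : ∀ r : ℕ,
    (airyQ R r).natDegree = r - 1
  | 0 | 1 | 2 => by simp [airyQ]
  | s + 3 => by
    have hlower : (C (((s + 1) * (s + 2) : ℕ) : R) * airyQ R s).natDegree <
        (X ^ (s + 2) : R[X]).natDegree := by
      rw [natDegree_X_pow]
      exact (natDegree_C_mul_le _ _).trans_lt (by rw [natDegree_airyQ R s]; omega)
    rw [airyQ, natDegree_add_eq_left_of_natDegree_lt hlower, natDegree_X_pow]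
    rfl

theorem derivative_derivative_X_pow_add_two {R : Type*} [CommSemiring R] (r : ℕ) :
    derivative (derivative (X ^ (r + 2) : R[X])) = C (((r + 1) * (r + 2) : ℕ) : R) * X ^ r := by
  simp only [derivative_X_pow, derivative_C_mul_X_pow]
  push_cast
  ring

theorem derivative_derivative_airyQ {R : Type*} [CommRing R] : ∀ r : ℕ,
    derivative (derivative (airyQ R r)) - X * airyQ R r - C (airyConst r : R) + X ^ r = 0
  | 0 | 1 => by simp [airyQ, airyConst]
  | 2 => by simp [airyQ, airyConst]; ring
  | s + 3 => by
    simp only [airyQ, airyConst, derivative_add, derivative_C_mul,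
      derivative_derivative_X_pow_add_two]
    simp only [Nat.cast_mul, C_mul]
    linear_combination (C ((s + 1 : ℕ) : R) * C ((s + 2 : ℕ) : R)) * derivative_derivative_airyQ (R := R) s

theorem deriv_neg_derivative_mul_add_mul_deriv {𝕜 : Type*} [NontriviallyNormedField 𝕜]
    (Q : 𝕜[X]) {y : 𝕜 → 𝕜} (hy : Differentiable 𝕜 y) (hy' : Differentiable 𝕜 (deriv y))
    (hairy : ∀ z, deriv (deriv y) z = z * y z) (z : 𝕜) :
    deriv (fun w => -(derivative Q).eval w * y w + Q.eval w * deriv y w) z =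
      (z * Q.eval z - (derivative (derivative Q)).eval z) * y z := by
  have hderiv : HasDerivAt (fun w => -(derivative Q).eval w * y w + Q.eval w * deriv y w)
      (-(derivative (derivative Q)).eval z * y z + -(derivative Q).eval z * deriv y z +
        ((derivative Q).eval z * deriv y z + Q.eval z * deriv (deriv y) z)) z :=
    ((Q.derivative.hasDerivAt z).neg.mul (hy z).hasDerivAt).add
      ((Q.hasDerivAt z).mul (hy' z).hasDerivAt)
  rw [hderiv.deriv, hairy z]
  ring

theorem airy_polynomial_reduction_general (r : ℕ) :
    ∃ Q : Polynomial ℂ,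
      Q.natDegree = r - 1 ∧
      (∀ z : ℂ,
        (Polynomial.derivative (Polynomial.derivative Q)).eval z - z * Q.eval z -
            (if r % 3 = 0 then (r.factorial : ℂ) / (3 ^ (r / 3) * ((r / 3).factorial : ℂ))
              else 0) + z ^ r = 0) ∧
      ∀ y : ℂ → ℂ, Differentiable ℂ y → Differentiable ℂ (deriv y) →
        (∀ z, deriv (deriv y) z = z * y z) →
        ∀ z : ℂ,
          deriv (fun w => (-(Polynomial.derivative Q).eval w) * y w + Q.eval w * deriv y w) z =
            z ^ r * y z -
              (if r % 3 = 0 then (r.factorial : ℂ) / (3 ^ (r / 3) * ((r / 3).factorial : ℂ))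
                else 0) * y z := by
  rw [← airyConst_eq_factorial_div]
  have hQ (z : ℂ) := congrArg (eval z) (derivative_derivative_airyQ (R := ℂ) r)
  simp only [eval_add, eval_sub, eval_mul, eval_X, eval_C, eval_pow, eval_zero] at hQ
  refine ⟨airyQ ℂ r, natDegree_airyQ ℂ r, hQ, fun y hy hy' hairy z => ?_⟩
  rw [deriv_neg_derivative_mul_add_mul_deriv _ hy hy' hairy]
  linear_combination -y z * hQ z

/-- For each `r ≥ 3` there is a polynomial `Q_{r-1}` of degree `r-1` with
`Q_{r-1}''(z) - z Q_{r-1}(z) - c_r + z^r = 0`, where `c_r = (3k)!/(3^k k!)` if `r = 3k`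
and `c_r = 0` otherwise; consequently, for any solution `y` of `y'' = zy`, with
`P_{r-2} = -Q_{r-1}'`, one has `d/dz[P_{r-2} y + Q_{r-1} y'] = z^r y - c_r y`. -/
theorem airy_polynomial_reduction (r : ℕ) (hr : 3 ≤ r) :
    ∃ Q : Polynomial ℂ,
      Q.natDegree = r - 1 ∧
      (∀ z : ℂ,
        (Polynomial.derivative (Polynomial.derivative Q)).eval z - z * Q.eval z -
            (if r % 3 = 0 then (r.factorial : ℂ) / (3 ^ (r / 3) * ((r / 3).factorial : ℂ))
              else 0) + z ^ r = 0) ∧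
      ∀ y : ℂ → ℂ, Differentiable ℂ y → Differentiable ℂ (deriv y) →
        (∀ z, deriv (deriv y) z = z * y z) →
        ∀ z : ℂ,
          deriv (fun w => (-(Polynomial.derivative Q).eval w) * y w + Q.eval w * deriv y w) z =
            z ^ r * y z -
              (if r % 3 = 0 then (r.factorial : ℂ) / (3 ^ (r / 3) * ((r / 3).factorial : ℂ))
                else 0) * y z :=
  airy_polynomial_reduction_general r
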